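/- arXiv:2104.06361 — 6 statements merged into one kernel-verified Lean document; each statement's English description precedes it below -/
import Mathlib

section
/- Let z be a nonzero Gaussian integer. Then every Gaussian integer u with 4·N(u) < N(z) lies in the strict fundamental domain 𝓕°(z), and every Gaussian integer u lying in 𝓕°(z) satisfies 2·N(u) ≤ N(z). (That is, { u ∈ ℤ[i] : N(u) < N(z)/4 } ⊆ 𝓕°(z) ∩ ℤ[i] ⊆ { u ∈ ℤ[i] : N(u) ≤ N(z)/2 }.) -/
/-- The strict fundamental domain `𝓕°(z)` of a Gaussian integer `z`:
the open square `{ z(α + βi) : -1/2 < α < 1/2, -1/2 < β < 1/2 }` in `ℂ`. -/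
def FdO (z : GaussianInt) : Set ℂ :=
  { w | ∃ α β : ℝ, w = (GaussianInt.toComplex z) * (α + β * Complex.I) ∧
      -(1/2 : ℝ) < α ∧ α < 1/2 ∧ -(1/2 : ℝ) < β ∧ β < 1/2 }

/-! Dividing by `z`, membership of `u` in `𝓕°(z)` says that `u / z` lies in the open square
`(-1/2, 1/2)²`, and `N(u) / N(z) = |u / z|²`. The square contains the open disc of radius `1/2`
and is contained in the open disc of radius `1/√2`. -/

namespace Complex

lemma abs_re_lt_and_abs_im_lt_of_normSq_lt {w : ℂ} {a : ℝ} (ha : 0 ≤ a) (hw : normSq w < a ^ 2) :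
    |w.re| < a ∧ |w.im| < a := by
  rw [normSq_apply] at hw
  constructor <;> apply abs_lt_of_sq_lt_sq _ ha <;> nlinarith [sq_nonneg w.re, sq_nonneg w.im]

lemma normSq_lt_of_abs_re_lt_of_abs_im_lt {w : ℂ} {a : ℝ} (hre : |w.re| < a) (him : |w.im| < a) :
    normSq w < 2 * a ^ 2 := by
  have hre2 : w.re ^ 2 < a ^ 2 := sq_lt_sq' (abs_lt.1 hre).1 (abs_lt.1 hre).2
  have him2 : w.im ^ 2 < a ^ 2 := sq_lt_sq' (abs_lt.1 him).1 (abs_lt.1 him).2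
  rw [normSq_apply]
  nlinarith

end Complex

namespace GaussianInt

lemma normSq_toComplex_div (u z : GaussianInt) :
    Complex.normSq (toComplex u / toComplex z) = (u.norm : ℝ) / z.norm := by
  rw [Complex.normSq_div, intCast_real_norm, intCast_real_norm]

end GaussianInt

open GaussianInt in
lemma mem_FdO_iff {z : GaussianInt} (hz : z ≠ 0) {w : ℂ} :
    w ∈ FdO z ↔ |(w / toComplex z).re| < 1/2 ∧ |(w / toComplex z).im| < 1/2 := by
  have hzc : toComplex z ≠ 0 := by rwa [Ne, toComplex_eq_zero]
  constructor
  · rintro ⟨α, β, rfl, hα₁, hα₂, hβ₁, hβ₂⟩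
    rw [mul_div_cancel_left₀ _ hzc]
    simp only [Complex.add_re, Complex.ofReal_re, Complex.re_ofReal_mul, Complex.I_re,
      Complex.add_im, Complex.ofReal_im, Complex.im_ofReal_mul, Complex.I_im]
    constructor <;> rw [abs_lt] <;> constructor <;> linarith
  · rintro ⟨hre, him⟩
    exact ⟨_, _, by rw [Complex.re_add_im, mul_div_cancel₀ _ hzc],
      (abs_lt.1 hre).1, (abs_lt.1 hre).2, (abs_lt.1 him).1, (abs_lt.1 him).2⟩

/-- For a nonzero Gaussian integer `z`: every Gaussian integer `u` with
`4 * N(u) < N(z)` lies in the strict fundamental domain `𝓕°(z)`, and every Gaussian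
integer `u` lying in `𝓕°(z)` satisfies `2 * N(u) ≤ N(z)`. -/
theorem FdO_sandwich (z : GaussianInt) (hz : z ≠ 0) :
    (∀ u : GaussianInt, 4 * u.norm < z.norm → GaussianInt.toComplex u ∈ FdO z) ∧
    (∀ u : GaussianInt, GaussianInt.toComplex u ∈ FdO z → 2 * u.norm ≤ z.norm) := by
  have hNz : (0 : ℝ) < z.norm := by exact_mod_cast GaussianInt.norm_pos.2 hz
  refine ⟨fun u hu ↦ ?_, fun u hu ↦ ?_⟩
  · have hu' : (4 * u.norm : ℝ) < z.norm := by exact_mod_cast hu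
    rw [mem_FdO_iff hz]
    apply Complex.abs_re_lt_and_abs_im_lt_of_normSq_lt (by norm_num)
    rw [GaussianInt.normSq_toComplex_div, div_lt_iff₀ hNz]
    linarith
  · obtain ⟨hre, him⟩ := (mem_FdO_iff hz).1 hu
    have hlt := Complex.normSq_lt_of_abs_re_lt_of_abs_im_lt hre him
    rw [GaussianInt.normSq_toComplex_div, div_lt_iff₀ hNz] at hlt
    have : (2 * u.norm : ℝ) < z.norm := by linarith
    exact_mod_cast this.le
end

section
/- Let v₁, v₂, z be Gaussian integers with z ≠ 0 such that v₁, v₂ ∈ 𝓕̄(z). If v₁ ≡ v₂ (mod z) and v₁ ∈ 𝓕°(z), then v₁ = v₂. -/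
/-- The closed fundamental domain `𝓕̄(z)` of a Gaussian integer `z`:
the closed square `{ z(α + βi) : -1/2 ≤ α ≤ 1/2, -1/2 ≤ β ≤ 1/2 }` in `ℂ`. -/
def FdC (z : GaussianInt) : Set ℂ :=
  { w | ∃ α β : ℝ, w = (GaussianInt.toComplex z) * (α + β * Complex.I) ∧
      -(1/2 : ℝ) ≤ α ∧ α ≤ 1/2 ∧ -(1/2 : ℝ) ≤ β ∧ β ≤ 1/2 }

open GaussianInt

lemma GaussianInt.eq_zero_of_abs_re_lt_one_of_abs_im_lt_one (q : GaussianInt)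
    (hre : |(toComplex q).re| < 1) (him : |(toComplex q).im| < 1) : q = 0 := by
  rw [← intCast_re] at hre
  rw [← intCast_im] at him
  ext
  · exact Int.abs_lt_one_iff.mp (by exact_mod_cast hre)
  · exact Int.abs_lt_one_iff.mp (by exact_mod_cast him)

lemma exists_sub_eq_mul_of_mem_FdO_of_mem_FdC {z : GaussianInt} {w₁ w₂ : ℂ}
    (h₁ : w₁ ∈ FdO z) (h₂ : w₂ ∈ FdC z) :
    ∃ c : ℂ, w₁ - w₂ = toComplex z * c ∧ |c.re| < 1 ∧ |c.im| < 1 := by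
  obtain ⟨α₁, β₁, rfl, hα₁, hα₁', hβ₁, hβ₁'⟩ := h₁
  obtain ⟨α₂, β₂, rfl, hα₂, hα₂', hβ₂, hβ₂'⟩ := h₂
  refine ⟨(α₁ - α₂ : ℝ) + (β₁ - β₂ : ℝ) * Complex.I, by push_cast; ring, ?_, ?_⟩
  · simpa using abs_lt.mpr ⟨by linarith, by linarith⟩
  · simpa using abs_lt.mpr ⟨by linarith, by linarith⟩

theorem eq_of_congruent_mem_FdO_general (v₁ v₂ z : GaussianInt) (hz : z ≠ 0)
    (h₂ : GaussianInt.toComplex v₂ ∈ FdC z)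
    (hcong : z ∣ v₁ - v₂) (ho : GaussianInt.toComplex v₁ ∈ FdO z) :
    v₁ = v₂ := by
  obtain ⟨q, hq⟩ := hcong
  obtain ⟨c, hc, hre, him⟩ := exists_sub_eq_mul_of_mem_FdO_of_mem_FdC ho h₂
  have hqc : toComplex q = c := by
    refine mul_left_cancel₀ (mt toComplex_eq_zero.mp hz) ?_
    rw [← hc, ← map_mul, ← hq, map_sub]
  have hq0 : q = 0 :=
    GaussianInt.eq_zero_of_abs_re_lt_one_of_abs_im_lt_one q (hqc ▸ hre) (hqc ▸ him)
  rwa [hq0, mul_zero, sub_eq_zero] at hq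

/-- If `v₁, v₂ ∈ 𝓕̄(z)`, `v₁ ≡ v₂ (mod z)` and `v₁ ∈ 𝓕°(z)`, then `v₁ = v₂`. -/
theorem eq_of_congruent_mem_FdO (v₁ v₂ z : GaussianInt) (hz : z ≠ 0)
    (h₁ : GaussianInt.toComplex v₁ ∈ FdC z) (h₂ : GaussianInt.toComplex v₂ ∈ FdC z)
    (hcong : z ∣ v₁ - v₂) (ho : GaussianInt.toComplex v₁ ∈ FdO z) :
    v₁ = v₂ :=
  eq_of_congruent_mem_FdO_general v₁ v₂ z hz h₂ hcong ho
end

section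
/- For every access structure 𝒜 on a finite set 𝒫 of n participants (a nonempty, upward-closed family of subsets of 𝒫 not containing the empty set) and every integer S, there exist nonzero Gaussian integers m₁, …, m_n and positive integers m⁻ < m⁺ with 4·m⁻ < m⁺ such that: (i) for every coalition C ⊆ 𝒫, either N(lcm{mᵢ : i ∈ C}) ≤ m⁻ or N(lcm{mᵢ : i ∈ C}) ≥ m⁺; (ii) 𝒜 = { A ⊆ 𝒫 : N(lcm{mᵢ : i ∈ A}) ≥ m⁺ }; and (iii) the set { s ∈ ℤ[i] : m⁻ ≤ N(s) < m⁺/4 } has cardinality at least S. -/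
/-- `L` is a least common multiple of the family `{m i : i ∈ C}` in `ℤ[i]`. -/
def IsLcm {ι : Type*} (C : Finset ι) (m : ι → GaussianInt) (L : GaussianInt) : Prop :=
  (∀ i ∈ C, m i ∣ L) ∧ ∀ K : GaussianInt, (∀ i ∈ C, m i ∣ K) → L ∣ K

/-!
Index the unauthorized coalitions `B` by pairwise coprime integers `p B ≥ N` and give participant
`i` the modulus `∏ p B` over the unauthorized `B` with `i ∉ B`. By coprimality the lcm of the
moduli of a coalition `C` is the product of `p B` over the unauthorized `B ⊉ C`. If `C` is
authorized, upward closure makes this every unauthorized `B`, so the norm is `P ^ 2` with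
`P = ∏ p B`; if `C` is unauthorized the factor `p C` is missing and the norm is at most
`(P / N) ^ 2`. With `N = 4 S + 4` the rational integers `k` with `P / N ≤ k < P / 2` supply the
`S` secrets.
-/

open Finset Function

theorem IsLcm.norm_eq {ι : Type*} {C : Finset ι} {m : ι → GaussianInt} {L L' : GaussianInt}
    (h : IsLcm C m L) (h' : IsLcm C m L') : L.norm = L'.norm :=
  Zsqrtd.norm_eq_of_associated (by norm_num) (associated_of_dvd_dvd (h.2 L' h'.1) (h'.2 L h.1))

theorem isLcm_prod_biUnion {ι κ : Type*} [DecidableEq κ] (C : Finset ι) (s : ι → Finset κ)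
    (q : κ → GaussianInt) (hq : (C.biUnion s : Set κ).Pairwise (IsCoprime on q)) :
    IsLcm C (fun i => ∏ B ∈ s i, q B) (∏ B ∈ C.biUnion s, q B) := by
  refine ⟨fun i hi => prod_dvd_prod_of_subset _ _ _ (subset_biUnion_of_mem s hi), ?_⟩
  intro K hK
  refine prod_dvd_of_coprime hq fun B hB => ?_
  obtain ⟨i, hi, hB⟩ := mem_biUnion.mp hB
  exact (dvd_prod_of_mem q hB).trans (hK i hi)

theorem GaussianInt.finite_setOf_norm_le (M : ℤ) : {s : GaussianInt | s.norm ≤ M}.Finite := by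
  have hinj : Injective fun s : GaussianInt => (s.re, s.im) :=
    fun s t h => Zsqrtd.ext (congrArg Prod.fst h) (congrArg Prod.snd h)
  refine ((Set.finite_Icc (-M) M).prod (Set.finite_Icc (-M) M)).preimage hinj.injOn |>.subset ?_
  intro s (hs : s.norm ≤ M)
  have hnorm : s.norm = s.re ^ 2 + s.im ^ 2 := by simp [Zsqrtd.norm]; ring
  have := Int.le_self_sq s.re
  have := Int.le_self_sq (-s.re)
  have := Int.le_self_sq s.im
  have := Int.le_self_sq (-s.im)
  simp only [Set.mem_preimage, Set.mem_prod, Set.mem_Icc, neg_sq] at *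
  omega

theorem le_ncard_setOf_sq_le_norm {a b S : ℕ} (h : 2 * (a + S) ≤ b) :
    S ≤ {s : GaussianInt | (a : ℤ) ^ 2 ≤ s.norm ∧ 4 * s.norm < (b : ℤ) ^ 2}.ncard := by
  have hsub : ((Ico a (a + S)).image (fun k : ℕ => (k : GaussianInt)) : Set GaussianInt) ⊆
      {s : GaussianInt | (a : ℤ) ^ 2 ≤ s.norm ∧ 4 * s.norm < (b : ℤ) ^ 2} := by
    intro s hs
    obtain ⟨k, hk, rfl⟩ := by simpa using hs
    rw [Set.mem_ofPred_eq, Zsqrtd.norm_natCast]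
    have h2k : 2 * k < b := by omega
    constructor <;> nlinarith
  have hfin : {s : GaussianInt | (a : ℤ) ^ 2 ≤ s.norm ∧ 4 * s.norm < (b : ℤ) ^ 2}.Finite :=
    (GaussianInt.finite_setOf_norm_le ((b : ℤ) ^ 2)).subset fun s ⟨_, hs⟩ =>
      show s.norm ≤ _ by linarith [GaussianInt.norm_nonneg s]
  calc S = ((Ico a (a + S)).image (fun k : ℕ => (k : GaussianInt))).card := by
        rw [card_image_of_injective _ Nat.cast_injective, Nat.card_Ico, Nat.add_sub_cancel_left]
    _ ≤ _ := by rw [← Set.ncard_coe_finset]; exact Set.ncard_le_ncard hsub hfin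

theorem exists_pairwise_coprime_forall_le (κ : Type*) [Countable κ] (N : ℕ) :
    ∃ p : κ → ℕ, (∀ B, N ≤ p B) ∧ Pairwise (Nat.Coprime on p) := by
  obtain ⟨e, he⟩ := exists_injective_nat κ
  have hprime : ∀ B, (Nat.nth Nat.Prime (N + e B)).Prime := fun B => Nat.prime_nth_prime _
  refine ⟨fun B => Nat.nth Nat.Prime (N + e B), fun B => ?_, fun B B' hBB' => ?_⟩
  · exact (Nat.le_add_right N (e B + 2)).trans (Nat.add_two_le_nth_prime _)
  · refine (Nat.coprime_primes (hprime B) (hprime B')).mpr fun h => hBB' (he ?_)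
    simpa using Nat.nth_injective Nat.infinite_setOfPred_prime h

section Coalition

variable {ι : Type*} [DecidableEq ι] (U : Finset (Finset ι)) (p : Finset ι → ℕ)

def coalitionProd (C : Finset ι) : ℕ := ∏ B ∈ U with ¬C ⊆ B, p B

theorem isLcm_coalitionProd (hp : Pairwise (Nat.Coprime on p)) (C : Finset ι) :
    IsLcm C (fun i => (coalitionProd U p {i} : GaussianInt)) (coalitionProd U p C) := by
  have hunion : C.biUnion (fun i => {B ∈ U | ¬{i} ⊆ B}) = {B ∈ U | ¬C ⊆ B} := by
    ext B; simp only [mem_biUnion, mem_filter, singleton_subset_iff, not_subset]; tauto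
  have := isLcm_prod_biUnion C (fun i => {B ∈ U | ¬{i} ⊆ B}) (fun B => (p B : GaussianInt))
    fun B _ B' _ hBB' => (hp hBB').cast
  simpa only [coalitionProd, Nat.cast_prod, hunion] using this

theorem IsLcm.norm_eq_sq_coalitionProd (hp : Pairwise (Nat.Coprime on p)) {C : Finset ι}
    {L : GaussianInt} (hL : IsLcm C (fun i => (coalitionProd U p {i} : GaussianInt)) L) :
    L.norm = ((coalitionProd U p C ^ 2 : ℕ) : ℤ) := by
  rw [hL.norm_eq (isLcm_coalitionProd U p hp C), Zsqrtd.norm_natCast]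
  push_cast
  ring

theorem coalitionProd_eq_prod {C : Finset ι} (hC : ∀ B ∈ U, ¬C ⊆ B) :
    coalitionProd U p C = ∏ B ∈ U, p B :=
  prod_congr (filter_true_of_mem hC) fun _ _ => rfl

theorem coalitionProd_ne_zero (hp0 : ∀ B, p B ≠ 0) (C : Finset ι) : coalitionProd U p C ≠ 0 :=
  prod_ne_zero_iff.mpr fun B _ => hp0 B

theorem coalitionProd_le_div {N : ℕ} (hN : 0 < N) (hpN : ∀ B, N ≤ p B) {C : Finset ι}
    (hC : C ∈ U) : coalitionProd U p C ≤ (∏ B ∈ U, p B) / N := by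
  have hdvd : coalitionProd U p C * p C ∣ ∏ B ∈ U, p B := by
    rw [← prod_erase_mul U p hC]
    refine mul_dvd_mul_right (prod_dvd_prod_of_subset _ _ _ fun B hB => ?_) _
    rw [mem_filter] at hB
    exact mem_erase.mpr ⟨fun h => hB.2 (h ▸ subset_refl C), hB.1⟩
  have hpos : 0 < ∏ B ∈ U, p B := prod_pos fun B _ => hN.trans_le (hpN B)
  rw [Nat.le_div_iff_mul_le hN]
  exact (Nat.mul_le_mul_left _ (hpN C)).trans (Nat.le_of_dvd hpos hdvd)

end Coalition

theorem any_access_structure_realizable_general (n : ℕ) (𝒜 : Set (Finset (Fin n)))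
    (h_mono : ∀ A B : Finset (Fin n), A ∈ 𝒜 → A ⊆ B → B ∈ 𝒜)
    (h_empty : ∅ ∉ 𝒜) (S : ℤ) :
    ∃ (m : Fin n → GaussianInt) (mlo mhi : ℕ),
      (∀ i, m i ≠ 0) ∧ 0 < mlo ∧ mlo < mhi ∧ 4 * mlo < mhi ∧
      (∀ C : Finset (Fin n), ∀ L : GaussianInt, IsLcm C m L →
        (L.norm ≤ (mlo : ℤ) ∨ (mhi : ℤ) ≤ L.norm)) ∧
      𝒜 = { A : Finset (Fin n) | ∃ L : GaussianInt, IsLcm A m L ∧ (mhi : ℤ) ≤ L.norm } ∧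
      S ≤ (Set.ncard { s : GaussianInt | (mlo : ℤ) ≤ s.norm ∧ 4 * s.norm < (mhi : ℤ) } : ℤ) := by
  classical
  set N := 4 * S.toNat + 4
  obtain ⟨p, hpN, hp⟩ := exists_pairwise_coprime_forall_le (Finset (Fin n)) N
  set U : Finset (Finset (Fin n)) := {B | B ∉ 𝒜}
  set P := ∏ B ∈ U, p B
  set x := P / N
  have hNP : N ≤ P :=
    (hpN ∅).trans (single_le_prod' (fun B _ => by grind) (by simpa [U] using h_empty))
  have hx : 4 * x ≤ P :=
    (Nat.mul_le_mul_right x (by omega)).trans ((N.mul_comm x).trans_le (Nat.div_mul_le_self P N))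
  have hx0 : 0 < x := Nat.div_pos hNP (by omega)
  have hnorm : ∀ C L, IsLcm C (fun i => (coalitionProd U p {i} : GaussianInt)) L →
      (C ∈ 𝒜 → L.norm = ((P ^ 2 : ℕ) : ℤ)) ∧ (C ∉ 𝒜 → L.norm ≤ ((x ^ 2 : ℕ) : ℤ)) := by
    intro C L hL
    rw [hL.norm_eq_sq_coalitionProd U p hp]
    refine ⟨fun hC => ?_, fun hC => ?_⟩
    · rw [coalitionProd_eq_prod U p fun B hB hCB => (mem_filter.mp hB).2 (h_mono C B hC hCB)]
    · have := coalitionProd_le_div U p (by omega) hpN (by simpa [U] using hC)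
      exact_mod_cast Nat.pow_le_pow_left this 2
  refine ⟨fun i => coalitionProd U p {i}, x ^ 2, P ^ 2,
    fun i => Nat.cast_ne_zero.mpr (coalitionProd_ne_zero U p (fun B => by grind) {i}),
    by positivity, by nlinarith, by nlinarith, fun C L hL => ?_, ?_, ?_⟩
  · by_cases hC : C ∈ 𝒜
    · exact Or.inr ((hnorm C L hL).1 hC).ge
    · exact Or.inl ((hnorm C L hL).2 hC)
  · ext A
    have hlcm := isLcm_coalitionProd U p hp A
    refine ⟨fun hA => ⟨_, hlcm, ((hnorm A _ hlcm).1 hA).ge⟩, ?_⟩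
    rintro ⟨L, hL, hLn⟩
    by_contra hA
    have : P ^ 2 ≤ x ^ 2 := by exact_mod_cast hLn.trans ((hnorm A L hL).2 hA)
    nlinarith
  · have := le_ncard_setOf_sq_le_norm (a := x) (b := P) (S := S.toNat) (by omega)
    calc S ≤ S.toNat := Int.self_le_toNat S
      _ ≤ _ := by simp only [Nat.cast_pow]; exact_mod_cast this

/-- Any access structure can be realized by a Mignotte secret sharing scheme over
`ℤ[i]`, with a set of secrets of cardinality at least `S`. -/
theorem any_access_structure_realizable (n : ℕ) (𝒜 : Set (Finset (Fin n)))
    (h_ne : 𝒜.Nonempty)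
    (h_mono : ∀ A B : Finset (Fin n), A ∈ 𝒜 → A ⊆ B → B ∈ 𝒜)
    (h_empty : ∅ ∉ 𝒜) (S : ℤ) :
    ∃ (m : Fin n → GaussianInt) (mlo mhi : ℕ),
      (∀ i, m i ≠ 0) ∧ 0 < mlo ∧ mlo < mhi ∧ 4 * mlo < mhi ∧
      (∀ C : Finset (Fin n), ∀ L : GaussianInt, IsLcm C m L →
        (L.norm ≤ (mlo : ℤ) ∨ (mhi : ℤ) ≤ L.norm)) ∧
      𝒜 = { A : Finset (Fin n) | ∃ L : GaussianInt, IsLcm A m L ∧ (mhi : ℤ) ≤ L.norm } ∧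
      S ≤ (Set.ncard { s : GaussianInt | (mlo : ℤ) ≤ s.norm ∧ 4 * s.norm < (mhi : ℤ) } : ℤ) :=
  any_access_structure_realizable_general n 𝒜 h_mono h_empty S
end

section
/- (Correctness of the original Mignotte threshold scheme over ℤ.) Let m₁ < m₂ < ⋯ < m_n be pairwise coprime integers ≥ 2 with m_{n−t+2}⋯m_n < m₁⋯m_t, and let s be an integer with m_{n−t+2}⋯m_n < s < m₁⋯m_t. Let A ⊆ {1,…,n} with |A| ≥ t, and for each i ∈ A let sᵢ = s mod mᵢ. Then s is the unique integer x with 0 ≤ x < ∏_{i∈A} mᵢ satisfying x ≡ sᵢ (mod mᵢ) for all i ∈ A. -/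
/-!
Every coalition of at least `t` participants holds `t` moduli that dominate `m₁, …, m_t`
termwise, so the product of its moduli is at least `m⁺ > s`. Since the moduli are pairwise
coprime, two integers of `[0, ∏ i ∈ A, m i)` with the same residues differ by a multiple of
that product, hence coincide.
-/

/-- `m⁻`: the product of the `t - 1` largest Mignotte moduli `m_{n-t+2} ⋯ m_n`. -/
def mignotteLo (n t : ℕ) (m : Fin n → ℤ) : ℤ :=
  ∏ i ∈ Finset.univ.filter (fun i : Fin n => n - (t - 1) ≤ (i : ℕ)), m i

/-- `m⁺`: the product of the `t` smallest Mignotte moduli `m₁ ⋯ m_t`. -/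
def mignotteHi (n t : ℕ) (m : Fin n → ℤ) : ℤ :=
  ∏ i ∈ Finset.univ.filter (fun i : Fin n => (i : ℕ) < t), m i

open Finset Function

theorem Fin.val_le_of_strictMono {t n : ℕ} {g : Fin t → Fin n} (hg : StrictMono g) (k : Fin t) :
    (k : ℕ) ≤ g k := by
  simpa using card_le_card_of_injOn g (fun i hi => by simpa using hg (mem_Iio.1 hi))
    hg.injective.injOn (s := Iio k) (t := Iio (g k))

theorem Fin.prod_filter_val_lt {M : Type*} [CommMonoid M] {t n : ℕ} (h : t ≤ n) (f : Fin n → M) :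
    ∏ i ∈ univ.filter (fun i : Fin n => (i : ℕ) < t), f i = ∏ k : Fin t, f (Fin.castLE h k) := by
  rw [← coe_castLEEmb h, ← prod_map]
  congr 1
  ext i
  simpa using ⟨fun hi => ⟨⟨i, hi⟩, rfl⟩, by rintro ⟨k, rfl⟩; exact k.isLt⟩

theorem Fin.prod_filter_val_lt_le_prod_of_card_le {R : Type*} [CommMonoidWithZero R]
    [PartialOrder R] [ZeroLEOneClass R] [PosMulMono R] {t n : ℕ} {m : Fin n → R}
    (hm : Monotone m) (h1 : ∀ i, 1 ≤ m i) {A : Finset (Fin n)} (hA : t ≤ #A) :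
    ∏ i ∈ univ.filter (fun i : Fin n => (i : ℕ) < t), m i ≤ ∏ i ∈ A, m i := by
  have htn : t ≤ n := hA.trans ((card_le_univ A).trans_eq (Fintype.card_fin n))
  have h0 : ∀ i, 0 ≤ m i := fun i => zero_le_one.trans (h1 i)
  set g := A.orderEmbOfCardLe hA
  calc ∏ i ∈ univ.filter (fun i : Fin n => (i : ℕ) < t), m i
        = ∏ k : Fin t, m (Fin.castLE htn k) := Fin.prod_filter_val_lt htn m
    _ ≤ ∏ k : Fin t, m (g k) :=
      prod_le_prod (fun k _ => h0 _) fun k _ => hm (Fin.val_le_of_strictMono g.strictMono k)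
    _ = ∏ i ∈ univ.map g.toEmbedding, m i := (prod_map _ _ _).symm
    _ ≤ ∏ i ∈ A, m i := prod_le_prod_of_subset_of_one_le
        (by simpa [subset_iff] using A.orderEmbOfCardLe_mem hA) (fun i _ => h0 i) fun i _ _ => h1 i

theorem Int.eq_of_emod_eq_of_lt_prod {ι : Type*} {A : Finset ι} {m : ι → ℤ}
    (hcop : (A : Set ι).Pairwise (IsCoprime on m)) {x y : ℤ} (hx0 : 0 ≤ x)
    (hx : x < ∏ i ∈ A, m i) (hy0 : 0 ≤ y) (hy : y < ∏ i ∈ A, m i)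
    (h : ∀ i ∈ A, x % m i = y % m i) : x = y := by
  have hdvd : ∏ i ∈ A, m i ∣ y - x := prod_dvd_of_coprime hcop fun i hi => Int.ModEq.dvd (h i hi)
  have := Int.eq_zero_of_abs_lt_dvd hdvd (abs_sub_lt_iff.2 ⟨by linarith, by linarith⟩)
  linarith

theorem mignotte_correct_general (n t : ℕ) (m : Fin n → ℤ)
    (hmono : StrictMono m) (h2 : ∀ i, 2 ≤ m i)
    (hcop : ∀ i j, i ≠ j → IsCoprime (m i) (m j))
    (s : ℤ) (hs₁ : mignotteLo n t m < s) (hs₂ : s < mignotteHi n t m)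
    (A : Finset (Fin n)) (hA : t ≤ A.card) :
    ∀ x : ℤ, (0 ≤ x ∧ x < ∏ i ∈ A, m i ∧ ∀ i ∈ A, x % m i = s % m i) ↔ x = s := by
  have hm1 : ∀ i, 1 ≤ m i := fun i => one_le_two.trans (h2 i)
  have hs0 : 0 ≤ s := (prod_nonneg fun i _ => zero_le_one.trans (hm1 i)).trans hs₁.le
  have hsA : s < ∏ i ∈ A, m i :=
    hs₂.trans_le (Fin.prod_filter_val_lt_le_prod_of_card_le hmono.monotone hm1 hA)
  intro x
  constructor
  · rintro ⟨hx0, hxA, hxs⟩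
    exact Int.eq_of_emod_eq_of_lt_prod (fun i _ j _ hij => hcop i j hij) hx0 hxA hs0 hsA hxs
  · rintro rfl
    exact ⟨hs0, hsA, fun _ _ => rfl⟩

/-- Correctness of Mignotte's threshold scheme over `ℤ`: an authorized coalition `A`
(with `|A| ≥ t`) recovers the secret `s` as the unique `x` with
`0 ≤ x < ∏ i ∈ A, m i` satisfying `x ≡ s mod m i (mod m i)` for all `i ∈ A`. -/
theorem mignotte_correct (n t : ℕ) (ht1 : 1 ≤ t) (htn : t ≤ n) (m : Fin n → ℤ)
    (hmono : StrictMono m) (h2 : ∀ i, 2 ≤ m i)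
    (hcop : ∀ i j, i ≠ j → IsCoprime (m i) (m j))
    (hcond : mignotteLo n t m < mignotteHi n t m)
    (s : ℤ) (hs₁ : mignotteLo n t m < s) (hs₂ : s < mignotteHi n t m)
    (A : Finset (Fin n)) (hA : t ≤ A.card) :
    ∀ x : ℤ, (0 ≤ x ∧ x < ∏ i ∈ A, m i ∧ ∀ i ∈ A, x % m i = s % m i) ↔ x = s :=
  mignotte_correct_general n t m hmono h2 hcop s hs₁ hs₂ A hA
end

section
/- (Security of the original Mignotte threshold scheme over ℤ against small coalitions.) Let m₁ < m₂ < ⋯ < m_n be pairwise coprime integers ≥ 2 with m_{n−t+2}⋯m_n < m₁⋯m_t, and let s be an integer with m_{n−t+2}⋯m_n < s < m₁⋯m_t. Let B ⊆ {1,…,n} with |B| < t, and for each i ∈ B let sᵢ = s mod mᵢ. Then the unique integer x with 0 ≤ x < ∏_{i∈B} mᵢ satisfying x ≡ sᵢ (mod mᵢ) for all i ∈ B is different from s. -/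
/-!
An unauthorized coalition `B` has `|B| ≤ t - 1` members, and the moduli increase, so
`∏_{i ∈ B} mᵢ` is at most the product `m⁻` of the `t - 1` largest moduli. Hence the
coalition's solution satisfies `x < ∏_{i ∈ B} mᵢ ≤ m⁻ < s`.
-/

open Finset

namespace Finset

variable {ι R : Type*} [CommSemiring R] [LinearOrder R] [IsOrderedRing R]
  {s t : Finset ι} {f : ι → R}

theorem prod_le_prod_of_card_le_of_forall_le (hst : #s ≤ #t) (hs : ∀ i ∈ s, 0 ≤ f i)
    (ht : ∀ j ∈ t, 1 ≤ f j) (hf : ∀ i ∈ s, ∀ j ∈ t, f i ≤ f j) :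
    ∏ i ∈ s, f i ≤ ∏ j ∈ t, f j := by
  rcases t.eq_empty_or_nonempty with rfl | htne
  · simp [card_eq_zero.mp (Nat.le_zero.mp hst)]
  have hM : 1 ≤ t.inf' htne f := le_inf' htne f ht
  calc ∏ i ∈ s, f i ≤ ∏ _i ∈ s, t.inf' htne f :=
        prod_le_prod hs fun i hi => le_inf' htne f (hf i hi)
    _ = t.inf' htne f ^ #s := prod_const _
    _ ≤ t.inf' htne f ^ #t := pow_le_pow_right₀ hM hst
    _ = ∏ _j ∈ t, t.inf' htne f := (prod_const _).symm
    _ ≤ ∏ j ∈ t, f j :=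
        prod_le_prod (fun _ _ => zero_le_one.trans hM) fun _ hj => inf'_le f hj

theorem prod_le_prod_of_card_le_of_forall_sdiff_le [DecidableEq ι] (hst : #s ≤ #t)
    (hs : ∀ i ∈ s, 0 ≤ f i) (ht : ∀ j ∈ t, 1 ≤ f j)
    (hf : ∀ i ∈ s \ t, ∀ j ∈ t \ s, f i ≤ f j) :
    ∏ i ∈ s, f i ≤ ∏ j ∈ t, f j := by
  rw [← prod_inter_mul_prod_sdiff s t, ← prod_inter_mul_prod_sdiff t s, inter_comm t s]
  refine mul_le_mul_of_nonneg_left ?_ (prod_nonneg fun i hi => hs i (mem_of_mem_inter_left hi))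
  exact prod_le_prod_of_card_le_of_forall_le (card_sdiff_le_card_sdiff_iff.mpr hst)
    (fun i hi => hs i (mem_sdiff.mp hi).1) (fun j hj => ht j (mem_sdiff.mp hj).1) hf

end Finset

theorem Fin.card_filter_sub_le_val (n k : ℕ) : #{i : Fin n | n - k ≤ (i : ℕ)} = min n k := by
  have := card_filter_add_card_filter_not (s := (univ : Finset (Fin n))) (fun i => (i : ℕ) < n - k)
  simp only [card_filter_val_lt, not_lt, card_univ, Fintype.card_fin] at this
  omega

theorem Fin.prod_le_prod_filter_sub_le_val {R : Type*} [CommSemiring R] [LinearOrder R]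
    [IsOrderedRing R] {n k : ℕ} {f : Fin n → R} (hf : Monotone f) (h1 : ∀ i, 1 ≤ f i)
    {s : Finset (Fin n)} (hs : #s ≤ k) :
    ∏ i ∈ s, f i ≤ ∏ i ∈ univ.filter (fun i : Fin n => n - k ≤ (i : ℕ)), f i := by
  refine prod_le_prod_of_card_le_of_forall_sdiff_le ?_ (fun i _ => zero_le_one.trans (h1 i))
    (fun j _ => h1 j) fun i hi j hj => hf ?_
  · rw [Fin.card_filter_sub_le_val]
    exact le_min (card_le_univ s |>.trans_eq (Fintype.card_fin n)) hs
  · simp only [mem_sdiff, mem_filter, mem_univ, true_and] at hi hj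
    exact Fin.le_def.mpr (by omega)

theorem mignotte_secure_general (n t : ℕ) (m : Fin n → ℤ)
    (hmono : StrictMono m) (h2 : ∀ i, 2 ≤ m i)
    (s : ℤ) (hs₁ : mignotteLo n t m < s)
    (B : Finset (Fin n)) (hB : B.card < t) :
    ∀ x : ℤ, 0 ≤ x → x < ∏ i ∈ B, m i → (∀ i ∈ B, x % m i = s % m i) → x ≠ s := by
  intro x _ hxB _
  have hB_le : ∏ i ∈ B, m i ≤ mignotteLo n t m :=
    Fin.prod_le_prod_filter_sub_le_val (s := B) (k := t - 1) hmono.monotone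
      (fun i => one_le_two.trans (h2 i)) (by omega)
  omega

/-- Security of Mignotte's threshold scheme over `ℤ`: an unauthorized coalition `B`
(with `|B| < t`) solving the congruence system obtains as unique solution `x` with
`0 ≤ x < ∏ i ∈ B, m i` an integer different from the secret `s`. -/
theorem mignotte_secure (n t : ℕ) (ht1 : 1 ≤ t) (htn : t ≤ n) (m : Fin n → ℤ)
    (hmono : StrictMono m) (h2 : ∀ i, 2 ≤ m i)
    (hcop : ∀ i j, i ≠ j → IsCoprime (m i) (m j))
    (hcond : mignotteLo n t m < mignotteHi n t m)
    (s : ℤ) (hs₁ : mignotteLo n t m < s) (hs₂ : s < mignotteHi n t m)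
    (B : Finset (Fin n)) (hB : B.card < t) :
    ∀ x : ℤ, 0 ≤ x → x < ∏ i ∈ B, m i → (∀ i ∈ B, x % m i = s % m i) → x ≠ s :=
  mignotte_secure_general n t m hmono h2 s hs₁ B hB
end

section
/- Let m₁ < m₂ < ⋯ < m_n be positive integers with m_{n−t+2}⋯m_n < m₁⋯m_t (where 1 ≤ t ≤ n). Then for every coalition C ⊆ {1,…,n}: if |C| < t then ∏_{i∈C} mᵢ ≤ m_{n−t+2}⋯m_n, and if |C| ≥ t then ∏_{i∈C} mᵢ ≥ m₁⋯m_t. -/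
/-!
List the coalition as `c₀ < c₁ < ⋯ < c_{k-1}`. Then `j ≤ c_j`, since the `j` smaller members are
distinct indices below `c_j`; applied to the reversed order this gives `c_j ≤ n - k + j`. Hence, the
moduli being increasing, `∏_{i ∈ C} mᵢ` lies between the products of the `k` smallest and of the `k`
largest moduli. As every modulus is at least `1`, passing from `k` to `t` smallest moduli
(`t ≤ k`) or to `t - 1` largest ones (`k ≤ t - 1`) only moves these bounds further out.
-/

open Finset

lemma Finset.prod_eq_prod_orderEmbOfFin {ι M : Type*} [LinearOrder ι] [CommMonoid M]
    (C : Finset ι) (f : ι → M) : ∏ i ∈ C, f i = ∏ j : Fin #C, f (C.orderEmbOfFin rfl j) := by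
  conv_lhs => rw [← C.map_orderEmbOfFin_univ rfl, prod_map]
  rfl

namespace Fin

variable {k n : ℕ}

lemma val_le_val_of_strictMono {f : Fin k → Fin n} (hf : StrictMono f) (j : Fin k) :
    (j : ℕ) ≤ f j := by
  simpa using card_le_card_of_injOn f (s := Iio j) (t := Iio (f j))
    (fun i hi ↦ by simpa using hf (by simpa using hi)) hf.injective.injOn

lemma prod_filter_val_lt_s19 {M : Type*} [CommMonoid M] (hk : k ≤ n) (f : Fin n → M) :
    ∏ i ∈ univ.filter (fun i : Fin n ↦ (i : ℕ) < k), f i = ∏ j : Fin k, f (castLE hk j) := by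
  have : univ.map (castLEEmb hk) = univ.filter (fun i : Fin n ↦ (i : ℕ) < k) := by
    ext i
    simp only [mem_map, mem_univ, true_and, mem_filter, castLEEmb_apply]
    exact ⟨fun ⟨j, hj⟩ ↦ hj ▸ j.isLt, fun hi ↦ ⟨⟨i, hi⟩, rfl⟩⟩
  rw [← this, prod_map]
  rfl

variable {R : Type*} [CommSemiring R] [PartialOrder R] [IsOrderedRing R] {m : Fin n → R}

lemma castLE_le_orderEmbOfFin (C : Finset (Fin n)) (j : Fin #C) :
    castLE (card_finset_fin_le C) j ≤ C.orderEmbOfFin rfl j :=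
  val_le_val_of_strictMono (C.orderEmbOfFin rfl).strictMono j

lemma prod_filter_val_lt_card_le_prod (hm : Monotone m) (h0 : ∀ i, 0 ≤ m i)
    (C : Finset (Fin n)) :
    ∏ i ∈ univ.filter (fun i : Fin n ↦ (i : ℕ) < #C), m i ≤ ∏ i ∈ C, m i := by
  rw [prod_filter_val_lt_s19 (card_finset_fin_le C), C.prod_eq_prod_orderEmbOfFin]
  exact prod_le_prod (fun _ _ ↦ h0 _) fun j _ ↦ hm (castLE_le_orderEmbOfFin C j)

lemma prod_le_prod_filter_val_lt_card (hm : Antitone m) (h0 : ∀ i, 0 ≤ m i)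
    (C : Finset (Fin n)) :
    ∏ i ∈ C, m i ≤ ∏ i ∈ univ.filter (fun i : Fin n ↦ (i : ℕ) < #C), m i := by
  rw [prod_filter_val_lt_s19 (card_finset_fin_le C), C.prod_eq_prod_orderEmbOfFin]
  exact prod_le_prod (fun _ _ ↦ h0 _) fun j _ ↦ hm (castLE_le_orderEmbOfFin C j)

lemma prod_le_prod_filter_sub_card_le_val (hm : Monotone m) (h0 : ∀ i, 0 ≤ m i)
    (C : Finset (Fin n)) :
    ∏ i ∈ C, m i ≤ ∏ i ∈ univ.filter (fun i : Fin n ↦ n - #C ≤ (i : ℕ)), m i := by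
  have hrev := prod_le_prod_filter_val_lt_card (m := m ∘ rev) (hm.comp_antitone rev_anti)
    (fun i ↦ h0 _) (C.map revPerm.toEmbedding)
  rw [card_map] at hrev
  calc ∏ i ∈ C, m i = ∏ i ∈ C.map revPerm.toEmbedding, m (rev i) := by simp [prod_map]
    _ ≤ _ := hrev
    _ = _ := by
      refine prod_equiv revPerm (fun i ↦ ?_) fun _ _ ↦ by simp
      have := i.isLt
      simp only [mem_filter, mem_univ, true_and, revPerm_apply, val_rev]
      omega

end Fin

theorem coalition_product_bounds_general (n t : ℕ)
    (m : Fin n → ℤ) (hpos : ∀ i, 0 < m i) (hmono : StrictMono m) :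
    ∀ C : Finset (Fin n),
      (C.card < t → ∏ i ∈ C, m i ≤ mignotteLo n t m) ∧
      (t ≤ C.card → mignotteHi n t m ≤ ∏ i ∈ C, m i) := by
  intro C
  have h0 : ∀ i, 0 ≤ m i := fun i ↦ (hpos i).le
  refine ⟨fun hC ↦ ?_, fun hC ↦ ?_⟩
  · calc ∏ i ∈ C, m i ≤ ∏ i ∈ univ.filter (fun i : Fin n ↦ n - #C ≤ (i : ℕ)), m i :=
          Fin.prod_le_prod_filter_sub_card_le_val hmono.monotone h0 C
      _ ≤ mignotteLo n t m :=
          prod_le_prod_of_subset_of_one_le (monotone_filter_right _ fun i hi ↦ by omega)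
            (fun i _ ↦ h0 i) fun i _ _ ↦ hpos i
  · calc mignotteHi n t m ≤ ∏ i ∈ univ.filter (fun i : Fin n ↦ (i : ℕ) < #C), m i :=
          prod_le_prod_of_subset_of_one_le (monotone_filter_right _ fun i hi ↦ by omega)
            (fun i _ ↦ h0 i) fun i _ _ ↦ hpos i
      _ ≤ ∏ i ∈ C, m i := Fin.prod_filter_val_lt_card_le_prod hmono.monotone h0 C

/-- For strictly increasing positive moduli with `m⁻ < m⁺`: a coalition `C` with
`|C| < t` has `∏ i ∈ C, m i ≤ m⁻`, and one with `|C| ≥ t` has `∏ i ∈ C, m i ≥ m⁺`. -/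
theorem coalition_product_bounds (n t : ℕ) (ht1 : 1 ≤ t) (htn : t ≤ n)
    (m : Fin n → ℤ) (hpos : ∀ i, 0 < m i) (hmono : StrictMono m)
    (hcond : mignotteLo n t m < mignotteHi n t m) :
    ∀ C : Finset (Fin n),
      (C.card < t → ∏ i ∈ C, m i ≤ mignotteLo n t m) ∧
      (t ≤ C.card → mignotteHi n t m ≤ ∏ i ∈ C, m i) :=
  coalition_product_bounds_general n t m hpos hmono
end
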